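/- Let γ > 0 and c, d be fixed. Let (X_k)_{k=0,…,K} with X_k ∈ ℝ^{N_k×d} and (Y_k)_{k=0,…,K} with Y_k ∈ ℝ^{N_k×c} be sequences of data and label matrices. Define R_0 = (X₀ᵀX₀ + γI)⁻¹, W_0 = R_0X₀ᵀY₀, and for k ≥ 1: R_k = R_{k−1} − R_{k−1}X_kᵀ(I + X_kR_{k−1}X_kᵀ)⁻¹X_kR_{k−1} and W_k = W_{k−1} + R_kX_kᵀ(Y_k − X_kW_{k−1}). Then for every k = 0, …, K, W_k = (Σ_{i=0}^{k} X_iᵀX_i + γI)⁻¹(Σ_{i=0}^{k} X_iᵀY_i); that is, the recursively trained weight equals the joint ridge least-squares solution on all data from phase 0 to phase k. -/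

import Mathlib

/-!
With `A_k = ∑_{i ≤ k} X_iᵀX_i + γI` (positive definite since `γ > 0`), one shows by induction that
`R_k = A_k⁻¹` and `W_k = A_k⁻¹ ∑_{i ≤ k} X_iᵀY_i`. Since `A_k = A_{k-1} + X_kᵀX_k`, the memory
recursion is exactly the Woodbury identity, and the weight update is checked after writing
`∑_{i ≤ k} X_iᵀY_i = A_k W_{k-1} + X_kᵀ(Y_k - X_k W_{k-1})`.
-/

open Matrix

namespace Fin

theorem sum_Iic_succ {M : Type*} [AddCommMonoid M] {K : ℕ} (f : Fin (K + 1) → M) (k : Fin K) :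
    ∑ i ∈ Finset.Iic k.succ, f i = ∑ i ∈ Finset.Iic k.castSucc, f i + f k.succ := by
  have : Finset.Iio k.succ = Finset.Iic k.castSucc := by
    ext i; simp [Fin.le_castSucc_iff]
  rw [← Finset.Iio_insert, Finset.sum_insert Finset.notMem_Iio_self, add_comm, this]

end Fin

namespace Matrix

variable {m n p : Type*}

theorem posSemidef_transpose_mul_self [Fintype m] [Fintype n] (X : Matrix m n ℝ) :
    (Xᵀ * X).PosSemidef := by
  simpa using posSemidef_conjTranspose_mul_self X

theorem posDef_sum_add_smul_one [DecidableEq n] {ι : Type*} (s : Finset ι) {M : ι → Matrix n n ℝ}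
    (hM : ∀ i ∈ s, (M i).PosSemidef) {γ : ℝ} (hγ : 0 < γ) :
    ((∑ i ∈ s, M i) + γ • (1 : Matrix n n ℝ)).PosDef := by
  rw [add_comm]
  exact (PosDef.one.smul hγ).add_posSemidef (posSemidef_sum s hM)

section

variable [Fintype m] [Fintype n] [DecidableEq n]

theorem inv_mul_add_inv_mul_transpose_mul_sub {K : Type*} [CommRing K] {A : Matrix n n K}
    (hA : IsUnit A) (X : Matrix m n K) (hA' : IsUnit (A + Xᵀ * X)) (B : Matrix n p K)
    (Y : Matrix m p K) :
    A⁻¹ * B + (A + Xᵀ * X)⁻¹ * Xᵀ * (Y - X * (A⁻¹ * B)) = (A + Xᵀ * X)⁻¹ * (B + Xᵀ * Y) := by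
  have hB : B + Xᵀ * Y = (A + Xᵀ * X) * (A⁻¹ * B) + Xᵀ * (Y - X * (A⁻¹ * B)) := by
    simp only [Matrix.add_mul, Matrix.mul_sub, ← Matrix.mul_assoc,
      mul_nonsing_inv A ((isUnit_iff_isUnit_det A).mp hA), Matrix.one_mul]
    abel
  rw [hB, Matrix.mul_add, ← Matrix.mul_assoc _ (A + Xᵀ * X),
    nonsing_inv_mul _ ((isUnit_iff_isUnit_det _).mp hA'), Matrix.one_mul, Matrix.mul_assoc _ Xᵀ]

theorem PosDef.inv_add_transpose_mul_self [DecidableEq m] {A : Matrix n n ℝ} (hA : A.PosDef)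
    (X : Matrix m n ℝ) :
    (A + Xᵀ * X)⁻¹ = A⁻¹ - A⁻¹ * Xᵀ * (1 + X * A⁻¹ * Xᵀ)⁻¹ * X * A⁻¹ := by
  have hS : (1 + X * A⁻¹ * Xᵀ).PosDef := by
    refine PosDef.one.add_posSemidef ?_
    simpa using hA.inv.posSemidef.mul_mul_conjTranspose_same X
  simpa using add_mul_mul_inv_eq_sub A Xᵀ 1 X hA.isUnit isUnit_one (by simpa using hS.isUnit)

theorem PosDef.ridge_update [DecidableEq m] {A : Matrix n n ℝ} (hA : A.PosDef) (X : Matrix m n ℝ)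
    (B : Matrix n p ℝ) (Y : Matrix m p ℝ) {R R' : Matrix n n ℝ} {W W' : Matrix n p ℝ}
    (hR : R = A⁻¹) (hW : W = A⁻¹ * B)
    (hR' : R' = R - R * Xᵀ * (1 + X * R * Xᵀ)⁻¹ * X * R)
    (hW' : W' = W + R' * Xᵀ * (Y - X * W)) :
    R' = (A + Xᵀ * X)⁻¹ ∧ W' = (A + Xᵀ * X)⁻¹ * (B + Xᵀ * Y) := by
  have hR'A : R' = (A + Xᵀ * X)⁻¹ := by
    rw [hR', hR, hA.inv_add_transpose_mul_self]
  refine ⟨hR'A, ?_⟩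
  rw [hW', hW, hR'A]
  exact inv_mul_add_inv_mul_transpose_mul_sub hA.isUnit X
    (hA.add_posSemidef (posSemidef_transpose_mul_self X)).isUnit B Y

end

end Matrix

/-- Weight-invariant property (Theorem 1 of REAL): the recursively trained
weight `W_k = W_{k−1} + R_kX_kᵀ(Y_k − X_kW_{k−1})`, with memory-matrix
recursion `R_k = R_{k−1} − R_{k−1}X_kᵀ(I + X_kR_{k−1}X_kᵀ)⁻¹X_kR_{k−1}`,
`R₀ = (X₀ᵀX₀ + γI)⁻¹` and `W₀ = R₀X₀ᵀY₀`, equals the joint ridge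
least-squares solution `(∑_{i=0}^{k} X_iᵀX_i + γI)⁻¹(∑_{i=0}^{k} X_iᵀY_i)`
at every phase `k = 0, …, K`. -/
theorem weight_invariant_property (K d c : ℕ)
    (N : Fin (K + 1) → ℕ) (γ : ℝ) (hγ : 0 < γ)
    (X : ∀ k : Fin (K + 1), Matrix (Fin (N k)) (Fin d) ℝ)
    (Y : ∀ k : Fin (K + 1), Matrix (Fin (N k)) (Fin c) ℝ)
    (R : Fin (K + 1) → Matrix (Fin d) (Fin d) ℝ)
    (W : Fin (K + 1) → Matrix (Fin d) (Fin c) ℝ)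
    (hR0 : R 0 = ((X 0)ᵀ * X 0 + γ • (1 : Matrix (Fin d) (Fin d) ℝ))⁻¹)
    (hW0 : W 0 = R 0 * (X 0)ᵀ * Y 0)
    (hRk : ∀ k : Fin K,
      R k.succ = R k.castSucc - R k.castSucc * (X k.succ)ᵀ *
        ((1 : Matrix (Fin (N k.succ)) (Fin (N k.succ)) ℝ) +
          X k.succ * R k.castSucc * (X k.succ)ᵀ)⁻¹ * X k.succ * R k.castSucc)
    (hWk : ∀ k : Fin K,
      W k.succ = W k.castSucc + R k.succ * (X k.succ)ᵀ *
        (Y k.succ - X k.succ * W k.castSucc)) :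
    ∀ k : Fin (K + 1),
      W k = ((∑ i ∈ Finset.Iic k, (X i)ᵀ * X i)
          + γ • (1 : Matrix (Fin d) (Fin d) ℝ))⁻¹ *
        (∑ i ∈ Finset.Iic k, (X i)ᵀ * Y i) := by
  set A : Fin (K + 1) → Matrix (Fin d) (Fin d) ℝ :=
    fun k => (∑ i ∈ Finset.Iic k, (X i)ᵀ * X i) + γ • 1 with hA
  suffices h : ∀ k, R k = (A k)⁻¹ ∧ W k = (A k)⁻¹ * ∑ i ∈ Finset.Iic k, (X i)ᵀ * Y i from
    fun k => (h k).2
  intro k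
  induction k using Fin.induction with
  | zero =>
    have hIic : Finset.Iic (0 : Fin (K + 1)) = {0} := Finset.Iic_bot
    simp only [hA, hIic, Finset.sum_singleton]
    exact ⟨hR0, by rw [hW0, hR0, Matrix.mul_assoc]⟩
  | succ k ih =>
    have hAk : A k.succ = A k.castSucc + (X k.succ)ᵀ * X k.succ := by
      simp only [hA, Fin.sum_Iic_succ]; abel
    rw [hAk, Fin.sum_Iic_succ]
    have hApos : (A k.castSucc).PosDef :=
      posDef_sum_add_smul_one _ (fun i _ => posSemidef_transpose_mul_self (X i)) hγ
    exact hApos.ridge_update _ _ _ ih.1 ih.2 (hRk k) (hWk k)
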